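/- arXiv:math/0702242 — 6 statements merged into one kernel-verified Lean document; each statement's English description precedes it below -/
import Mathlib

section
/- Let c : ℤ → ℂ be periodic with minimum period n and let m ≥ 0 be an integer. Then the rational function r(x) = ∑_{k≥0} c(k) k^m x^k has poles only at n-th roots of unity, and every pole of r has order exactly m+1. -/
/-!
Discrete Fourier inversion on `ZMod n` writes `c k = ∑ⱼ bⱼ ψⱼ ^ k` with pairwise distinct `n`-th
roots of unity `ψⱼ`, so the series is `∑ⱼ bⱼ ∑ₖ k ^ m (ψⱼ X) ^ k`. Each inner series equals
`Eₘ(ψⱼ X) / (1 - ψⱼ X) ^ (m + 1)` for a polynomial `Eₘ` with `Eₘ(1) = m!` (iterate `X d/dX`).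
Over the common denominator `∏ⱼ (1 - ψⱼ X) ^ (m + 1)`, taken over the `j` with `bⱼ ≠ 0`, the
numerator at `ψⱼ⁻¹` is `bⱼ m! ∏_{i ≠ j} (1 - ψᵢ / ψⱼ) ^ (m + 1) ≠ 0`. Hence numerator and
denominator are coprime and each pole `ψⱼ⁻¹` has order exactly `m + 1`.
-/

open PowerSeries Polynomial

section Eulerian

variable {R : Type*} [CommRing R]

/-- The recursion is `X d/dX` applied to `eulerianPoly u m / (1 - u X) ^ (m + 1)`; for `u = 1`
these are the Eulerian polynomials. -/
noncomputable def eulerianPoly (u : R) : ℕ → R[X]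
  | 0 => 1
  | m + 1 => Polynomial.X * ((1 - Polynomial.C u * Polynomial.X) * derivative (eulerianPoly u m)
      + Polynomial.C ((m + 1) * u) * eulerianPoly u m)

theorem mk_pow_succ_mul_pow_eq_X_mul_derivative (u : R) (m : ℕ) :
    PowerSeries.mk (fun k : ℕ => (k : R) ^ (m + 1) * u ^ k) =
      PowerSeries.X * d⁄dX R (PowerSeries.mk fun k : ℕ => (k : R) ^ m * u ^ k) := by
  ext (_ | k)
  · simp
  · rw [PowerSeries.coeff_succ_X_mul, PowerSeries.coeff_derivative]
    simp only [PowerSeries.coeff_mk]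
    push_cast
    ring

theorem one_sub_C_mul_X_pow_succ_mul_mk (u : R) (m : ℕ) :
    (((1 - Polynomial.C u * Polynomial.X) ^ (m + 1) : R[X]) : R⟦X⟧) *
        PowerSeries.mk (fun k : ℕ => (k : R) ^ m * u ^ k) = eulerianPoly u m := by
  induction m with
  | zero =>
    simp only [zero_add, pow_one, pow_zero, eulerianPoly, Polynomial.coe_one,
      Polynomial.coe_sub, Polynomial.coe_mul, Polynomial.coe_C, Polynomial.coe_X]
    ext (_ | k)
    · simp
    · simp [sub_mul, mul_assoc, PowerSeries.coeff_succ_X_mul, pow_succ']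
  | succ m ih =>
    have hd := congrArg (d⁄dX R) ih
    rw [mk_pow_succ_mul_pow_eq_X_mul_derivative, eulerianPoly]
    simp only [Polynomial.coe_pow, Polynomial.coe_sub, Polynomial.coe_one, Polynomial.coe_mul,
      Polynomial.coe_C, Polynomial.coe_X, Polynomial.coe_add, ← derivative_coe] at hd ih ⊢
    simp only [map_mul, map_add, map_one, map_natCast]
    have hdP : d⁄dX R ((1 - PowerSeries.C u * PowerSeries.X) ^ (m + 1)) =
        -(((m : R⟦X⟧) + 1) * (1 - PowerSeries.C u * PowerSeries.X) ^ m * PowerSeries.C u) := by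
      simp [mul_assoc]
    rw [Derivation.leibniz, hdP, smul_eq_mul, smul_eq_mul] at hd
    linear_combination (PowerSeries.X * (1 - PowerSeries.C u * PowerSeries.X)) * hd
      + (PowerSeries.X * (m + 1) * PowerSeries.C u) * ih

theorem eval_eulerianPoly_of_mul_eq_one {u ω : R} (h : u * ω = 1) (m : ℕ) :
    (eulerianPoly u m).eval ω = m.factorial := by
  induction m with
  | zero => simp [eulerianPoly]
  | succ m ih =>
    simp only [eulerianPoly, eval_mul, eval_add, eval_sub, eval_one, eval_C, eval_X, ih]
    push_cast [Nat.factorial_succ]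
    linear_combination ((m + 1) * m.factorial - ω * (derivative (eulerianPoly u m)).eval ω) * h

end Eulerian

section CommonDenominator

variable {ι R : Type*} [DecidableEq ι] [CommRing R]

theorem Finset.prod_mul_sum_eq_sum_mul_prod_erase (S : Finset ι) {q f N : ι → R}
    (h : ∀ j ∈ S, q j * f j = N j) :
    (∏ j ∈ S, q j) * ∑ j ∈ S, f j = ∑ j ∈ S, N j * ∏ j' ∈ S.erase j, q j' := by
  rw [Finset.mul_sum]
  refine Finset.sum_congr rfl fun j hj => ?_
  rw [← Finset.mul_prod_erase S q hj, ← h j hj]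
  ring

theorem Finset.sum_mul_prod_erase_of_eq_zero (S : Finset ι) (x y : ι → R) {j₀ : ι}
    (hj₀ : j₀ ∈ S) (hy : y j₀ = 0) :
    ∑ j ∈ S, x j * ∏ j' ∈ S.erase j, y j' = x j₀ * ∏ j' ∈ S.erase j₀, y j' :=
  Finset.sum_eq_single_of_mem j₀ hj₀ fun j _ hj => by
    rw [Finset.prod_eq_zero (Finset.mem_erase.2 ⟨Ne.symm hj, hj₀⟩) hy, mul_zero]

end CommonDenominator

section PartialFractions

variable {K : Type*} [Field K]

theorem rootMultiplicity_one_sub_C_mul_X_pow {u ω : K} (h : u * ω = 1) (N : ℕ) :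
    ((1 - Polynomial.C u * Polynomial.X) ^ N).rootMultiplicity ω = N := by
  have hu : Polynomial.C (-u) ≠ 0 := by simpa using left_ne_zero_of_mul_eq_one h
  have hfactor :
      1 - Polynomial.C u * Polynomial.X = Polynomial.C (-u) * (Polynomial.X - Polynomial.C ω) := by
    have h' : Polynomial.C u * Polynomial.C ω = 1 := by rw [← Polynomial.C_mul, h, map_one]
    rw [map_neg]
    linear_combination -h'
  rw [hfactor, mul_pow, rootMultiplicity_mul
      (mul_ne_zero (pow_ne_zero _ hu) (pow_ne_zero _ (X_sub_C_ne_zero ω))),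
    ← Polynomial.C_pow, rootMultiplicity_C, rootMultiplicity_X_sub_C_pow, zero_add]

theorem exists_mul_eq_one_of_isRoot_prod_one_sub_C_mul_X_pow {ι : Type*} {S : Finset ι}
    {u : ι → K} {N : ℕ} {ω : K}
    (h : (∏ j ∈ S, (1 - Polynomial.C (u j) * Polynomial.X) ^ N).IsRoot ω) :
    ∃ j ∈ S, u j * ω = 1 := by
  rw [IsRoot, eval_prod, Finset.prod_eq_zero_iff] at h
  obtain ⟨j, hj, hz⟩ := h
  rw [eval_pow, eval_sub, eval_one, eval_mul, eval_C, eval_X] at hz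
  exact ⟨j, hj, (sub_eq_zero.1 (pow_eq_zero_iff'.1 hz).1).symm⟩

theorem eval_prod_erase_one_sub_C_mul_X_pow_ne_zero {ι : Type*} [DecidableEq ι] {S : Finset ι}
    {u : ι → K} (hu : Set.InjOn u S) {j₀ : ι} (hj₀ : j₀ ∈ S) {ω : K} (h : u j₀ * ω = 1)
    (N : ℕ) : (∏ j ∈ S.erase j₀, (1 - Polynomial.C (u j) * Polynomial.X) ^ N).eval ω ≠ 0 := by
  rw [eval_prod, Finset.prod_ne_zero_iff]
  intro j hj
  rw [eval_pow, eval_sub, eval_one, eval_mul, eval_C, eval_X]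
  refine pow_ne_zero _ (sub_ne_zero.2 fun h' => Finset.ne_of_mem_erase hj ?_)
  exact hu (Finset.mem_of_mem_erase hj) hj₀
    (mul_right_cancel₀ (right_ne_zero_of_mul_eq_one h) (h'.symm.trans h.symm))

theorem exists_isCoprime_mul_mk_sum_pow_mul_pow [IsAlgClosed K] [CharZero K]
    {ι : Type*} [DecidableEq ι] (S : Finset ι) {u b : ι → K} (hu : Set.InjOn u S)
    (hb : ∀ j ∈ S, b j ≠ 0) (m : ℕ) :
    ∃ num den : K[X], IsCoprime num den ∧ den ≠ 0 ∧
      (den : K⟦X⟧) * PowerSeries.mk (fun k : ℕ => (∑ j ∈ S, b j * u j ^ k) * (k : K) ^ m) =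
        num ∧
      ∀ ω, den.IsRoot ω → (∃ j ∈ S, u j * ω = 1) ∧ den.rootMultiplicity ω = m + 1 := by
  set q : ι → K[X] := fun j => (1 - Polynomial.C (u j) * Polynomial.X) ^ (m + 1)
  set num := ∑ j ∈ S, Polynomial.C (b j) * eulerianPoly (u j) m * ∏ j' ∈ S.erase j, q j'
  have eval_num_ne_zero {ω : K} {j₀ : ι} (hj₀ : j₀ ∈ S) (h : u j₀ * ω = 1) :
      num.eval ω ≠ 0 := by
    simp only [num, eval_finsetSum, eval_mul, eval_prod]
    rw [Finset.sum_mul_prod_erase_of_eq_zero S _ _ hj₀ (by simp [q, h]), ← eval_prod,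
      eval_C, eval_eulerianPoly_of_mul_eq_one h]
    exact mul_ne_zero (mul_ne_zero (hb j₀ hj₀) (Nat.cast_ne_zero.2 m.factorial_ne_zero))
      (eval_prod_erase_one_sub_C_mul_X_pow_ne_zero hu hj₀ h _)
  have hden : ∏ j ∈ S, q j ≠ 0 :=
    Finset.prod_ne_zero_iff.2 fun j _ hj => by simpa [q] using congrArg (eval 0) hj
  refine ⟨num, ∏ j ∈ S, q j, ?_, hden, ?_, fun ω hω => ?_⟩
  · rw [isCoprime_iff_aeval_ne_zero_of_isAlgClosed (k := K) K]
    intro ω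
    simp only [coe_aeval_eq_eval]
    by_cases hω : (∏ j ∈ S, q j).eval ω = 0
    · obtain ⟨j₀, hj₀, h⟩ := exists_mul_eq_one_of_isRoot_prod_one_sub_C_mul_X_pow hω
      exact Or.inl (eval_num_ne_zero hj₀ h)
    · exact Or.inr hω
  · have hseries : PowerSeries.mk (fun k : ℕ => (∑ j ∈ S, b j * u j ^ k) * (k : K) ^ m) =
        ∑ j ∈ S, PowerSeries.C (b j) * PowerSeries.mk (fun k : ℕ => (k : K) ^ m * u j ^ k) := by
      ext k
      simp only [PowerSeries.coeff_mk, map_sum, PowerSeries.coeff_C_mul, Finset.sum_mul]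
      exact Finset.sum_congr rfl fun _ _ => by ring
    rw [hseries]
    simp only [num, ← coeToPowerSeries.ringHom_apply, map_prod, map_sum, map_mul]
    refine Finset.prod_mul_sum_eq_sum_mul_prod_erase S fun j _ => ?_
    rw [mul_left_comm]
    simp only [coeToPowerSeries.ringHom_apply, q, one_sub_C_mul_X_pow_succ_mul_mk,
      Polynomial.coe_C]
  · obtain ⟨j₀, hj₀, h⟩ := exists_mul_eq_one_of_isRoot_prod_one_sub_C_mul_X_pow hω
    refine ⟨⟨j₀, hj₀, h⟩, ?_⟩
    rw [← Finset.mul_prod_erase S q hj₀] at hden ⊢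
    rw [rootMultiplicity_mul hden, rootMultiplicity_one_sub_C_mul_X_pow h,
      rootMultiplicity_eq_zero (eval_prod_erase_one_sub_C_mul_X_pow_ne_zero hu hj₀ h _), add_zero]

end PartialFractions

open ZMod in
theorem Function.Periodic.eq_sum_dft_mul_stdAddChar_pow {n : ℕ} [NeZero n] {c : ℤ → ℂ}
    (hc : Function.Periodic c n) (k : ℕ) :
    c k = ∑ j : ZMod n, (n : ℂ)⁻¹ * 𝓕 (fun i => c i.val) j * stdAddChar j ^ k := by
  have hk : c ((k : ZMod n).val) = c k := by
    rw [ZMod.val_natCast, ← hc.nat_mul (k / n) ((k % n : ℕ) : ℤ)]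
    exact congrArg c (by exact_mod_cast Nat.mod_add_div' k n)
  have hinv := congrFun (LinearEquiv.symm_apply_apply 𝓕 fun i : ZMod n => c i.val) (k : ZMod n)
  rw [invDFT_apply] at hinv
  rw [← hk, ← hinv, smul_eq_mul, Finset.mul_sum]
  refine Finset.sum_congr rfl fun j _ => ?_
  rw [smul_eq_mul, mul_comm j, ← nsmul_eq_mul, AddChar.map_nsmul_eq_pow]
  ring

theorem poles_of_periodic_times_monomial_general (c : ℤ → ℂ) (n m : ℕ) (hn : 0 < n)
    (hper : ∀ k : ℤ, c (k + n) = c k) :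
    ∃ num den : Polynomial ℂ, IsCoprime num den ∧ den ≠ 0 ∧
      (den : PowerSeries ℂ) * PowerSeries.mk (fun k : ℕ => c k * (k : ℂ) ^ m) =
        (num : PowerSeries ℂ) ∧
      ∀ ω : ℂ, den.IsRoot ω → ω ^ n = 1 ∧ den.rootMultiplicity ω = m + 1 := by
  have : NeZero n := ⟨hn.ne'⟩
  set b : ZMod n → ℂ := fun j => (n : ℂ)⁻¹ * ZMod.dft (fun i => c i.val) j
  set S := Finset.univ.filter fun j => b j ≠ 0
  have hc (k : ℕ) : c k = ∑ j ∈ S, b j * ZMod.stdAddChar j ^ k := by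
    rw [Finset.sum_filter_of_ne fun j _ hj => left_ne_zero_of_mul hj]
    exact Function.Periodic.eq_sum_dft_mul_stdAddChar_pow hper k
  obtain ⟨num, den, hcop, hden, heq, hroots⟩ := exists_isCoprime_mul_mk_sum_pow_mul_pow S
    ZMod.injective_stdAddChar.injOn (fun j hj => (Finset.mem_filter.1 hj).2) m
  refine ⟨num, den, hcop, hden, by simpa only [hc] using heq, fun ω hω => ?_⟩
  obtain ⟨⟨j, -, hj⟩, hmult⟩ := hroots ω hω
  have hroot : ZMod.stdAddChar j ^ n = 1 := by
    rw [← AddChar.map_nsmul_eq_pow, nsmul_eq_mul, ZMod.natCast_self, zero_mul,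
      AddChar.map_zero_eq_one]
  exact ⟨by rw [← one_pow n, ← hj, mul_pow, hroot, one_mul], hmult⟩

/-- If `c : ℤ → ℂ` is periodic with minimum period `n` (and not
identically zero) and `m ≥ 0`, then `r(x) = ∑_{k≥0} c(k) k^m x^k` is a rational
function whose poles are all n-th roots of unity, each of order exactly `m+1`. -/
theorem poles_of_periodic_times_monomial (c : ℤ → ℂ) (n m : ℕ) (hn : 0 < n)
    (hper : ∀ k : ℤ, c (k + n) = c k)
    (hmin : ∀ p : ℕ, 0 < p → (∀ k : ℤ, c (k + p) = c k) → n ≤ p)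
    (hne : ∃ k : ℤ, c k ≠ 0) :
    ∃ num den : Polynomial ℂ, IsCoprime num den ∧ den ≠ 0 ∧
      (den : PowerSeries ℂ) * PowerSeries.mk (fun k : ℕ => c k * (k : ℂ) ^ m) =
        (num : PowerSeries ℂ) ∧
      ∀ ω : ℂ, den.IsRoot ω → ω ^ n = 1 ∧ den.rootMultiplicity ω = m + 1 :=
  poles_of_periodic_times_monomial_general c n m hn hper
end

section
/- Suppose r(x) is a proper rational function all of whose poles are primitive n-th roots of unity. Then r is the generating function of a quasi-polynomial q(k) = c_d(k)k^d + ⋯ + c_0(k), where each coefficient function c_j is either identically zero or has minimum period exactly n. -/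
/-!
Peeling off a pole `ω` of multiplicity `m + 1` writes `num / den` as `a / (X - ω)^(m+1)` plus a
proper fraction with a smaller denominator; the coefficients of `a / (X - ω)^(m+1)` are a
polynomial in `k` times `ω⁻ᵏ`. So `num / den` generates `∑_β Q_β(k) βᵏ`, `β` running over the
inverses of the poles, and the coefficient of `kʲ` is `c_j(k) = ∑_β (Q_β)_j βᵏ`. As every `β` is a
primitive `n`-th root of unity, `c_j` has period `n`; a period `m` gives
`∑_β (Q_β)_j (βᵐ - 1) βᵏ = 0` for all `k`, and linear independence of the sequences `k ↦ βᵏ`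
yields `βᵐ = 1`, i.e. `n ∣ m`, for any `β` with `(Q_β)_j ≠ 0`.
-/

open Polynomial
open scoped PowerSeries

variable {K : Type*} [Field K]

theorem linearIndependent_fun_pow :
    LinearIndependent K (fun β : K => fun k : ℕ => β ^ k) :=
  ((linearIndependent_monoidHom (Multiplicative ℕ) K).comp (powersHom K)
    (powersHom K).injective).map' (LinearEquiv.funCongrLeft K K Multiplicative.ofAdd).toLinearMap
    (LinearEquiv.ker _)

/-- `preHilbertPoly K m 0` evaluates at `k` to `(k + m).choose m`. -/
theorem mk_mul_X_sub_C_pow [CharZero K] {ω : K} (hω : ω ≠ 0) (m : ℕ) :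
    PowerSeries.mk (fun k => (preHilbertPoly K m 0).eval (k : K) * ω⁻¹ ^ k) *
      ((X - C ω : K[X]) : K⟦X⟧) ^ (m + 1) = PowerSeries.C ((-ω) ^ (m + 1)) := by
  have hfactor : ((X - C ω : K[X]) : K⟦X⟧) =
      PowerSeries.C (-ω) * (1 - PowerSeries.C ω⁻¹ * PowerSeries.X) := by
    have h : PowerSeries.C ω * PowerSeries.C ω⁻¹ = 1 := by
      rw [← map_mul, mul_inv_cancel₀ hω, map_one]
    rw [coe_sub, coe_X, coe_C, map_neg]
    linear_combination (-PowerSeries.X) * h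
  have h :=
    congrArg (PowerSeries.rescale ω⁻¹) (PowerSeries.mk_add_choose_mul_one_sub_pow_eq_one K m)
  rw [map_mul, map_pow, map_sub, map_one, PowerSeries.rescale_X, PowerSeries.rescale_mk] at h
  rw [hfactor, mul_pow, ← map_pow, mul_left_comm]
  convert congrArg (PowerSeries.C ((-ω) ^ (m + 1)) * ·) h using 2
  · congr 1; ext k
    rw [PowerSeries.coeff_mk, PowerSeries.coeff_mk,
      preHilbertPoly_eq_choose_sub_add K m (Nat.zero_le k)]
    simp [mul_comm, add_comm]
  · simp

noncomputable def expPoly (Q : K →₀ K[X]) (k : ℕ) : K :=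
  Q.sum fun β P => P.eval (k : K) * β ^ k

@[simp]
theorem expPoly_zero : expPoly (0 : K →₀ K[X]) = 0 := by
  ext k; simp [expPoly]

theorem expPoly_add (Q R : K →₀ K[X]) : expPoly (Q + R) = expPoly Q + expPoly R := by
  ext k
  exact Finsupp.sum_add_index' (by simp) (by simp [add_mul])

theorem expPoly_single (β : K) (P : K[X]) (k : ℕ) :
    expPoly (Finsupp.single β P) k = P.eval (k : K) * β ^ k :=
  Finsupp.sum_single_index (by simp)

theorem mul_mk_expPoly_single_eq [CharZero K] {ω : K} (hω : ω ≠ 0) {m : ℕ} {den h : K[X]}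
    (hden : den = (X - C ω) ^ (m + 1) * h) (a : K) :
    (den : K⟦X⟧) * PowerSeries.mk
      (expPoly (Finsupp.single ω⁻¹ (C (a / (-ω) ^ (m + 1)) * preHilbertPoly K m 0))) =
      (C a * h : K[X]) := by
  have hmk : PowerSeries.mk
      (expPoly (Finsupp.single ω⁻¹ (C (a / (-ω) ^ (m + 1)) * preHilbertPoly K m 0))) =
      PowerSeries.C (a / (-ω) ^ (m + 1)) *
        PowerSeries.mk (fun k => (preHilbertPoly K m 0).eval (k : K) * ω⁻¹ ^ k) := by
    ext k
    rw [PowerSeries.coeff_mk, PowerSeries.coeff_C_mul, PowerSeries.coeff_mk, expPoly_single,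
      eval_mul, eval_C, mul_assoc]
  have hpow : ((-ω) ^ (m + 1)) ≠ 0 := pow_ne_zero _ (neg_ne_zero.mpr hω)
  rw [hmk, hden, coe_mul, coe_pow, coe_mul, coe_C]
  calc _ = (h : K⟦X⟧) * PowerSeries.C (a / (-ω) ^ (m + 1)) *
        (PowerSeries.mk (fun k => (preHilbertPoly K m 0).eval (k : K) * ω⁻¹ ^ k) *
          ((X - C ω : K[X]) : K⟦X⟧) ^ (m + 1)) := by ring
    _ = _ := by
      rw [mk_mul_X_sub_C_pow hω, mul_assoc, ← map_mul, div_mul_cancel₀ _ hpow, mul_comm]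

theorem exists_pole_part [CharZero K] {den num : K[X]} {ω : K} (hω : den.IsRoot ω) (hω0 : ω ≠ 0)
    (hdeg : num.degree < den.degree) :
    ∃ den' num' P : K[X], den = (X - C ω) * den' ∧ num'.degree < den'.degree ∧
      (den : K⟦X⟧) * PowerSeries.mk (expPoly (Finsupp.single ω⁻¹ P)) +
        ((X - C ω) * num' : K[X]) = num := by
  have hden : den ≠ 0 := ne_zero_of_degree_gt hdeg
  obtain ⟨h, hfac, hndvd⟩ := den.exists_eq_pow_rootMultiplicity_mul_and_not_dvd hden ω
  obtain ⟨m, hm⟩ := Nat.exists_eq_succ_of_ne_zero ((rootMultiplicity_pos hden).mpr hω).ne'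
  rw [hm] at hfac
  have hh0 : h ≠ 0 := right_ne_zero_of_mul (hfac ▸ hden)
  have hhω : h.eval ω ≠ 0 := fun hc => hndvd (dvd_iff_isRoot.mpr hc)
  set A := num.eval ω / h.eval ω
  have hroot : (num - C A * h).IsRoot ω := by simp [A, div_mul_cancel₀ _ hhω]
  have hsplit : den = (X - C ω) * ((X - C ω) ^ m * h) := by rw [hfac, pow_succ']; ring
  refine ⟨(X - C ω) ^ m * h, (num - C A * h) /ₘ (X - C ω),
    C (A / (-ω) ^ (m + 1)) * preHilbertPoly K m 0, hsplit, ?_, ?_⟩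
  · have hh : h.degree < den.degree := by
      apply degree_lt_degree
      rw [hfac, natDegree_mul (pow_ne_zero _ (X_sub_C_ne_zero ω)) hh0, natDegree_pow,
        natDegree_X_sub_C]
      omega
    have hlt : (num - C A * h).degree < den.degree :=
      (degree_sub_le _ _).trans_lt <| max_lt hdeg <| by
        rw [← smul_eq_C_mul]; exact (degree_smul_le A h).trans_lt hh
    rw [← mul_divByMonic_eq_iff_isRoot.mpr hroot, hsplit, degree_mul, degree_mul,
      degree_X_sub_C] at hlt
    exact (WithBot.add_lt_add_iff_left WithBot.one_ne_bot).mp hlt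
  · rw [mul_mk_expPoly_single_eq hω0 hfac, mul_divByMonic_eq_iff_isRoot.mpr hroot, ← coe_add,
      add_sub_cancel]

theorem exists_mul_mk_expPoly_eq [IsAlgClosed K] [CharZero K] {den num : K[X]}
    (h0 : ¬den.IsRoot 0) (hdeg : num.degree < den.degree) :
    ∃ Q : K →₀ K[X], (∀ β ∈ Q.support, den.IsRoot β⁻¹) ∧
      (den : K⟦X⟧) * PowerSeries.mk (expPoly Q) = num := by
  classical
  induction hN : den.natDegree using Nat.strong_induction_on generalizing den num with
  | _ N ih =>
  by_cases hnum : num = 0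
  · exact ⟨0, by simp, by ext; simp [hnum, PowerSeries.coeff_mul]⟩
  obtain ⟨ω, hω⟩ := IsAlgClosed.exists_root den
    ((zero_le_degree_iff.mpr hnum).trans_lt hdeg).ne'
  have hω0 : ω ≠ 0 := by rintro rfl; exact h0 hω
  obtain ⟨den', num', P, hsplit, hdeg', hpole⟩ := exists_pole_part hω hω0 hdeg
  have hden' : den' ≠ 0 := ne_zero_of_degree_gt hdeg'
  obtain ⟨Q', hQ'roots, hQ'⟩ := ih den'.natDegree
    (by rw [← hN, hsplit, natDegree_mul (X_sub_C_ne_zero ω) hden', natDegree_X_sub_C]; omega)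
    (fun h => h0 (h.dvd (Dvd.intro_left _ hsplit.symm))) hdeg' rfl
  refine ⟨Q' + Finsupp.single ω⁻¹ P, fun β hβ => ?_, ?_⟩
  · rcases Finset.mem_union.mp (Finsupp.support_add hβ) with hβ | hβ
    · exact (hQ'roots β hβ).dvd (Dvd.intro_left _ hsplit.symm)
    · rw [Finset.mem_singleton.mp (Finsupp.support_single_subset hβ), inv_inv]; exact hω
  · have hmk : PowerSeries.mk (expPoly Q' + expPoly (Finsupp.single ω⁻¹ P)) =
        PowerSeries.mk (expPoly Q') + PowerSeries.mk (expPoly (Finsupp.single ω⁻¹ P)) := by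
      ext; simp
    rw [← hpole, expPoly_add, hmk, mul_add, add_comm, coe_mul, ← hQ', hsplit, coe_mul]
    ring

noncomputable def expPolyCoeff (Q : K →₀ K[X]) (j : ℕ) (k : ℤ) : K :=
  Q.sum fun β P => P.coeff j * β ^ k

theorem expPoly_eq_sum_expPolyCoeff {Q : K →₀ K[X]} {d : ℕ}
    (hd : ∀ β ∈ Q.support, (Q β).natDegree ≤ d) :
    expPoly Q = fun k : ℕ => ∑ j ∈ Finset.range (d + 1), expPolyCoeff Q j k * (k : K) ^ j := by
  ext k
  simp only [expPoly, expPolyCoeff, Finsupp.sum, Finset.sum_mul]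
  rw [Finset.sum_comm]
  refine Finset.sum_congr rfl fun β hβ => ?_
  rw [eval_eq_sum_range' (Nat.lt_succ_of_le (hd β hβ)), Finset.sum_mul]
  refine Finset.sum_congr rfl fun j _ => ?_
  rw [zpow_natCast]
  ring

theorem expPolyCoeff_periodic {Q : K →₀ K[X]} {n : ℕ} (hn : 0 < n)
    (h : ∀ β ∈ Q.support, β ^ n = 1) (j : ℕ) : Function.Periodic (expPolyCoeff Q j) n :=
  fun k => Finset.sum_congr rfl fun β hβ => by
    have hβ0 : β ≠ 0 := ne_zero_pow hn.ne' (by rw [h β hβ]; exact one_ne_zero)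
    dsimp only
    rw [zpow_add₀ hβ0, zpow_natCast, h β hβ, mul_one]

theorem le_of_periodic_expPolyCoeff {Q : K →₀ K[X]} {n m j : ℕ}
    (hQ : ∀ β ∈ Q.support, IsPrimitiveRoot β n) (hj : expPolyCoeff Q j ≠ 0) (hm : 0 < m)
    (hper : Function.Periodic (expPolyCoeff Q j) m) : n ≤ m := by
  have hvanish : ∀ β ∈ Q.support, (Q β).coeff j * (β ^ m - 1) = 0 := by
    refine linearIndependent_iff'.mp (linearIndependent_fun_pow (K := K)) _ _ (funext fun k => ?_)
    have hk := sub_eq_zero.mpr (hper k)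
    simp only [expPolyCoeff, Finsupp.sum, ← Finset.sum_sub_distrib] at hk
    rw [Pi.zero_apply, ← hk, Finset.sum_apply]
    refine Finset.sum_congr rfl fun β _ => ?_
    rw [← Nat.cast_add, zpow_natCast, zpow_natCast, Pi.smul_apply, smul_eq_mul, pow_add]
    ring
  obtain ⟨β, hβ, hcoeff⟩ : ∃ β ∈ Q.support, (Q β).coeff j ≠ 0 := by
    by_contra! h
    exact hj (funext fun k => Finset.sum_eq_zero fun β hβ => by simp [h β hβ])
  have hβm : β ^ m = 1 := sub_eq_zero.mp ((mul_eq_zero.mp (hvanish β hβ)).resolve_left hcoeff)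
  exact Nat.le_of_dvd hm (((hQ β hβ).pow_eq_one_iff_dvd m).mp hβm)

theorem rational_primitive_poles_quasipoly_general (n : ℕ) (hn : 0 < n)
    (num den : Polynomial ℂ)
    (hprop : num.degree < den.degree)
    (hpoles : ∀ ω : ℂ, den.IsRoot ω →
      ω ^ n = 1 ∧ ∀ r : ℕ, 0 < r → r < n → ω ^ r ≠ 1) :
    ∃ (d : ℕ) (c : ℕ → ℤ → ℂ),
      (∀ j, ∃ p : ℕ, 0 < p ∧ ∀ k : ℤ, c j (k + p) = c j k) ∧
      (den : PowerSeries ℂ) *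
          PowerSeries.mk (fun k : ℕ =>
            ∑ j ∈ Finset.range (d + 1), c j k * (k : ℂ) ^ j) =
        (num : PowerSeries ℂ) ∧
      ∀ j, j ≤ d → ((∀ k : ℤ, c j k = 0) ∨
        ((∀ k : ℤ, c j (k + n) = c j k) ∧
          ∀ m : ℕ, 0 < m → (∀ k : ℤ, c j (k + m) = c j k) → n ≤ m)) := by
  have h0 : ¬den.IsRoot 0 := fun h => by simpa [hn.ne'] using (hpoles 0 h).1
  obtain ⟨Q, hQroots, hQ⟩ := exists_mul_mk_expPoly_eq h0 hprop
  have hprim : ∀ β ∈ Q.support, IsPrimitiveRoot β n := fun β hβ => by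
    obtain ⟨h1, h2⟩ := hpoles _ (hQroots β hβ)
    simpa using (IsPrimitiveRoot.mk_of_lt _ hn h1 h2).inv
  have hper := expPolyCoeff_periodic hn fun β hβ => (hprim β hβ).pow_eq_one
  set d := Q.support.sup fun β => (Q β).natDegree
  have hd : ∀ β ∈ Q.support, (Q β).natDegree ≤ d := fun β hβ =>
    Finset.le_sup (f := fun β => (Q β).natDegree) hβ
  refine ⟨d, expPolyCoeff Q, fun j => ⟨n, hn, hper j⟩, ?_, fun j _ => ?_⟩
  · rw [← hQ, expPoly_eq_sum_expPolyCoeff hd]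
  · by_cases hj : expPolyCoeff Q j = 0
    · exact Or.inl (congrFun hj)
    · exact Or.inr ⟨hper j, fun m hm hperm => le_of_periodic_expPolyCoeff hprim hj hm hperm⟩

/-- Corollary `generalquasithm`: a proper rational function all
of whose poles are primitive n-th roots of unity is the generating function of
a quasi-polynomial each of whose coefficient functions is either identically
zero or has minimum period exactly `n`. -/
theorem rational_primitive_poles_quasipoly (n : ℕ) (hn : 0 < n)
    (num den : Polynomial ℂ) (hcop : IsCoprime num den) (hden : den ≠ 0)
    (hprop : num.degree < den.degree)
    (hpoles : ∀ ω : ℂ, den.IsRoot ω →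
      ω ^ n = 1 ∧ ∀ r : ℕ, 0 < r → r < n → ω ^ r ≠ 1) :
    ∃ (d : ℕ) (c : ℕ → ℤ → ℂ),
      (∀ j, ∃ p : ℕ, 0 < p ∧ ∀ k : ℤ, c j (k + p) = c j k) ∧
      (den : PowerSeries ℂ) *
          PowerSeries.mk (fun k : ℕ =>
            ∑ j ∈ Finset.range (d + 1), c j k * (k : ℂ) ^ j) =
        (num : PowerSeries ℂ) ∧
      ∀ j, j ≤ d → ((∀ k : ℤ, c j k = 0) ∨
        ((∀ k : ℤ, c j (k + n) = c j k) ∧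
          ∀ m : ℕ, 0 < m → (∀ k : ℤ, c j (k + m) = c j k) → n ≤ m)) :=
  rational_primitive_poles_quasipoly_general n hn num den hprop hpoles
end

section
/- Let p_0, …, p_d be distinct positive integers with p_d | p_{d−1} | ⋯ | p_0, and fix 0 ≤ j ≤ d. If ω is a primitive p_j-th root of unity, then ω is a pole of order exactly j+1 of the rational function 1/((1 − x^{p_0})(1 − x^{p_1}) ⋯ (1 − x^{p_d})). -/
open Polynomial

lemma rm_finset_prod {ι : Type*} (s : Finset ι) (f : ι → Polynomial ℂ)
    (h : ∀ i ∈ s, f i ≠ 0) (x : ℂ) :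
    Polynomial.rootMultiplicity x (∏ i ∈ s, f i)
      = ∑ i ∈ s, Polynomial.rootMultiplicity x (f i) := by
  classical
  induction s using Finset.cons_induction with
  | empty =>
    simp only [Finset.prod_empty, Finset.sum_empty]
    exact Polynomial.rootMultiplicity_eq_zero (by simp [Polynomial.IsRoot])
  | cons a s ha ih =>
    rw [Finset.prod_cons, Finset.sum_cons,
      Polynomial.rootMultiplicity_mul
        (mul_ne_zero (h a (Finset.mem_cons_self a s))
          (Finset.prod_ne_zero_iff.mpr fun i hi => h i (Finset.mem_cons_of_mem hi))),
      ih (fun i hi => h i (Finset.mem_cons_of_mem hi))]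

lemma rm_one_sub_X_pow_eq_one {n : ℕ} (hn : 0 < n) {ω : ℂ} (hω : ω ^ n = 1) :
    Polynomial.rootMultiplicity ω (1 - (Polynomial.X : Polynomial ℂ) ^ n) = 1 := by
  have hsep : ((Polynomial.X : Polynomial ℂ) ^ n - 1).Separable :=
    Polynomial.X_pow_sub_one_separable_iff.mpr (by exact_mod_cast hn.ne')
  have hne : ((Polynomial.X : Polynomial ℂ) ^ n - 1) ≠ 0 := by
    intro h
    have := congrArg (Polynomial.eval (0 : ℂ)) h
    simp [zero_pow hn.ne'] at this
  have heq : (1 - (Polynomial.X : Polynomial ℂ) ^ n)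
      = Polynomial.C (-1) * ((Polynomial.X : Polynomial ℂ) ^ n - 1) := by
    rw [map_neg, map_one]; ring
  rw [heq, Polynomial.rootMultiplicity_mul
      (mul_ne_zero (by simp : (Polynomial.C (-1) : Polynomial ℂ) ≠ 0) hne)]
  have h0 : Polynomial.rootMultiplicity ω (Polynomial.C (-1) : Polynomial ℂ) = 0 :=
    Polynomial.rootMultiplicity_eq_zero (by simp [Polynomial.IsRoot])
  have hroot : Polynomial.IsRoot ((Polynomial.X : Polynomial ℂ) ^ n - 1) ω := by
    simp [Polynomial.IsRoot, hω]
  have h1 : 1 ≤ Polynomial.rootMultiplicity ω ((Polynomial.X : Polynomial ℂ) ^ n - 1) :=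
    (Polynomial.rootMultiplicity_pos hne).mpr hroot
  have h2 : Polynomial.rootMultiplicity ω ((Polynomial.X : Polynomial ℂ) ^ n - 1) ≤ 1 :=
    Polynomial.rootMultiplicity_le_one_of_separable hsep ω
  omega

/-- with `p_d | ⋯ | p_0` distinct positive integers and `ω` a
primitive `p_j`-th root of unity, `ω` is a pole of order exactly `j+1` of
`1/((1-x^{p_0}) ⋯ (1-x^{p_d}))`, i.e. a root of multiplicity `j+1` of the
denominator. -/
theorem pole_order_at_primitive_root (d j : ℕ) (hj : j ≤ d)
    (p : Fin (d + 1) → ℕ) (hp : ∀ i, 0 < p i)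
    (hchain : ∀ i i' : Fin (d + 1), i ≤ i' → p i' ∣ p i)
    (hdist : Function.Injective p)
    (ω : ℂ) (hω : ω ^ p ⟨j, Nat.lt_succ_of_le hj⟩ = 1)
    (hprim : ∀ r : ℕ, 0 < r → r < p ⟨j, Nat.lt_succ_of_le hj⟩ → ω ^ r ≠ 1) :
    Polynomial.rootMultiplicity ω
      (∏ i, (1 - (Polynomial.X : Polynomial ℂ) ^ (p i))) = j + 1 := by
  classical
  set J : Fin (d + 1) := ⟨j, Nat.lt_succ_of_le hj⟩ with hJ
  have hfne : ∀ i : Fin (d + 1), (1 - (Polynomial.X : Polynomial ℂ) ^ (p i)) ≠ 0 := by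
    intro i h
    have := congrArg (Polynomial.eval (0 : ℂ)) h
    simp [zero_pow (hp i).ne'] at this
  rw [rm_finset_prod _ _ (fun i _ => hfne i)]
  have hval : ∀ i : Fin (d + 1),
      Polynomial.rootMultiplicity ω (1 - (Polynomial.X : Polynomial ℂ) ^ (p i))
        = if (i : ℕ) ≤ j then 1 else 0 := by
    intro i
    by_cases hi : (i : ℕ) ≤ j
    · rw [if_pos hi]
      obtain ⟨k, hk⟩ := hchain i J hi
      have : ω ^ p i = 1 := by rw [hk, pow_mul, hω, one_pow]
      exact rm_one_sub_X_pow_eq_one (hp i) this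
    · rw [if_neg hi]
      have hJi : J ≤ i := le_of_not_ge (by simpa [hJ, Fin.le_def] using hi)
      have hdvd : p i ∣ p J := hchain J i hJi
      have hne : p i ≠ p J := fun h => hi (by
        have : i = J := hdist h
        simp [this, hJ])
      have hlt : p i < p J := lt_of_le_of_ne (Nat.le_of_dvd (hp J) hdvd) hne
      have hroot : ω ^ p i ≠ 1 := hprim _ (hp i) hlt
      exact Polynomial.rootMultiplicity_eq_zero (by
        simp [Polynomial.IsRoot, sub_eq_zero]
        exact fun h => hroot h.symm)
  simp only [hval]
  rw [Fin.sum_univ_eq_sum_range (fun i => if i ≤ j then 1 else 0)]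
  rw [← Finset.sum_filter]
  have : (Finset.range (d + 1)).filter (fun i => i ≤ j) = Finset.range (j + 1) := by
    ext i
    simp only [Finset.mem_filter, Finset.mem_range, Nat.lt_succ_iff]
    omega
  rw [this]
  simp
end

section
/- Let q(k) = c_d(k)k^d + ⋯ + c_0(k) be a quasi-polynomial with generating function r(x) = ∑_{k≥0} q(k)x^k. If every pole of r of order at least j+1 is an n-th root of unity, then n is a period of c_j. -/
/-!
Let `P` be a common period of the `c i`. Each `c i` is a combination of the characters
`k ↦ ζ ^ k`, `ζ ^ P = 1`, so `q k = ∑ ζ, Q_ζ(k) ζ ^ k` for polynomials `Q_ζ` whose `j`-th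
coefficient is the `ζ`-coefficient of `c j`. Writing `Q_ζ` in the basis `(X + 1) ⋯ (X + i)`,
whose series `∑ (k + 1) ⋯ (k + i) ζ ^ k x ^ k` is `i! / (1 - ζ x) ^ (i + 1)`, shows that the
`ζ`-part of `r` has a pole of order exactly `deg Q_ζ + 1` at `ζ⁻¹`, and the other parts have
no pole there. Hence `ζ⁻¹` is a pole of `r` of order at least `j + 1` whenever the
`ζ`-coefficient of `c j` is nonzero, so only `n`-th roots of unity occur in `c j`.
-/

open Polynomial
open scoped PowerSeries Nat

theorem exists_pos_common_period {ι α : Type*} (s : Finset ι) {f : ι → ℤ → α}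
    (h : ∀ i ∈ s, ∃ p : ℕ, 0 < p ∧ Function.Periodic (f i) p) :
    ∃ P : ℕ, 0 < P ∧ ∀ i ∈ s, Function.Periodic (f i) P := by
  choose! p hp hfp using h
  refine ⟨∏ i ∈ s, p i, Finset.prod_pos hp, fun i hi => ?_⟩
  obtain ⟨m, hm⟩ := Finset.dvd_prod_of_mem p hi
  simpa [hm, mul_comm] using (hfp i hi).nat_mul m

theorem Function.Periodic.exists_eq_sum_nthRootsFinset_mul_zpow {f : ℤ → ℂ} {P : ℕ}
    (hf : Function.Periodic f P) (hP : 0 < P) :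
    ∃ β : ℂ → ℂ, ∀ k : ℤ, f k = ∑ ζ ∈ nthRootsFinset P (1 : ℂ), β ζ * ζ ^ k := by
  classical
  have : NeZero P := ⟨hP.ne'⟩
  set g : ZMod P → ℂ := fun x => f x.val
  have hfg (k : ℤ) : f k = g k := by
    simp only [g, ZMod.val_intCast, Int.emod_def, mul_comm (P : ℤ)]
    exact (hf.sub_int_mul_eq _).symm
  have hmaps : ∀ ψ ∈ (Finset.univ : Finset (AddChar (ZMod P) ℂ)),
      ψ 1 ∈ nthRootsFinset P (1 : ℂ) := by
    intro ψ _
    rw [mem_nthRootsFinset hP, ← AddChar.map_nsmul_eq_pow, nsmul_one, ZMod.natCast_self,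
      AddChar.map_zero_eq_one]
  -- Expand `g` in the basis of characters, grouping them by `ψ 1`, since `ψ k = ψ 1 ^ k`.
  set r := (AddChar.complexBasis (ZMod P)).repr g
  refine ⟨fun ζ => ∑ ψ with ψ 1 = ζ, r ψ, fun k => ?_⟩
  have hg := congr_fun ((AddChar.complexBasis (ZMod P)).sum_repr g) (k : ZMod P)
  simp only [AddChar.complexBasis_apply, Finset.sum_apply, Pi.smul_apply, smul_eq_mul] at hg
  rw [hfg, ← hg, ← Finset.sum_fiberwise_of_maps_to hmaps]
  refine Finset.sum_congr rfl fun ζ _ => ?_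
  rw [Finset.sum_mul]
  refine Finset.sum_congr rfl fun ψ hψ => ?_
  rw [(Finset.mem_filter.mp hψ).2.symm, ← AddChar.map_zsmul_eq_zpow, Int.smul_one_eq_cast]

theorem periodic_sum_mul_zpow {K : Type*} [Field K] {S : Finset K} (hS : (0 : K) ∉ S)
    {β : K → K} {n : ℕ} (h : ∀ ζ ∈ S, β ζ ≠ 0 → ζ ^ n = 1) :
    Function.Periodic (fun k : ℤ => ∑ ζ ∈ S, β ζ * ζ ^ k) n := by
  intro k
  refine Finset.sum_congr rfl fun ζ hζ => ?_
  by_cases hβ : β ζ = 0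
  · simp [hβ]
  · rw [zpow_add₀ (ne_of_mem_of_not_mem hζ hS), zpow_natCast, h ζ hζ hβ, mul_one]

theorem Polynomial.Monic.natDegree_sub_C_coeff_mul_le {R : Type*} [Ring R] {P Q : R[X]}
    {d : ℕ} (hQ : Q.Monic) (hQd : Q.natDegree = d + 1) (hP : P.natDegree ≤ d + 1) :
    (P - C (P.coeff (d + 1)) * Q).natDegree ≤ d := by
  rw [natDegree_le_iff_coeff_eq_zero]
  intro m hm
  rw [coeff_sub, coeff_C_mul]
  rcases (Nat.succ_le_of_lt hm).eq_or_lt with rfl | hlt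
  · have hQ1 : Q.coeff (d + 1) = 1 := hQd ▸ hQ.coeff_natDegree
    rw [Nat.succ_eq_add_one, hQ1, mul_one, sub_self]
  · rw [coeff_eq_zero_of_natDegree_lt (p := P) (by omega),
      coeff_eq_zero_of_natDegree_lt (p := Q) (by omega), mul_zero, sub_zero]

section ExpPolySeries

variable {R : Type*} [CommRing R]

noncomputable def expPolySeries (ζ : R) (P : R[X]) : R⟦X⟧ :=
  PowerSeries.mk fun k => P.eval (k : R) * ζ ^ k

theorem expPolySeries_add (ζ : R) (P Q : R[X]) :
    expPolySeries ζ (P + Q) = expPolySeries ζ P + expPolySeries ζ Q := by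
  ext k
  simp [expPolySeries, add_mul]

theorem expPolySeries_C_mul (ζ a : R) (P : R[X]) :
    expPolySeries ζ (C a * P) = PowerSeries.C a * expPolySeries ζ P := by
  ext k
  simp [expPolySeries, mul_assoc]

theorem mk_eq_sum_expPolySeries {S : Finset R} {s : Finset ℕ} {c : ℕ → ℤ → R}
    {β : ℕ → R → R} (hc : ∀ i ∈ s, ∀ k : ℕ, c i k = ∑ ζ ∈ S, β i ζ * ζ ^ k) :
    PowerSeries.mk (fun k : ℕ => ∑ i ∈ s, c i k * ((k : ℤ) : R) ^ i) =
      ∑ ζ ∈ S, expPolySeries ζ (∑ i ∈ s, C (β i ζ) * X ^ i) := by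
  ext k
  simp only [PowerSeries.coeff_mk, map_sum, expPolySeries, eval_finsetSum, eval_mul, eval_C,
    eval_pow, eval_X, Int.cast_natCast, Finset.sum_mul]
  rw [Finset.sum_congr rfl fun i hi => by rw [hc i hi, Finset.sum_mul], Finset.sum_comm]
  exact Finset.sum_congr rfl fun ζ _ => Finset.sum_congr rfl fun i _ => by ring

theorem eval_natCast_ascPochhammer_comp_X_add_one (i k : ℕ) :
    ((ascPochhammer R i).comp (X + 1)).eval (k : R) = (i ! * (k + i).choose i : ℕ) := by
  rw [eval_comp, ← Nat.ascFactorial_eq_factorial_mul_choose, ← ascPochhammer_nat_eq_ascFactorial]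
  simp

theorem one_sub_C_mul_X_pow_mul_expPolySeries_ascPochhammer (ζ : R) (i : ℕ) :
    (((1 - C ζ * X) ^ (i + 1) : R[X]) : R⟦X⟧) *
      expPolySeries ζ ((ascPochhammer R i).comp (X + 1)) = PowerSeries.C (i ! : R) := by
  have h := congrArg (PowerSeries.rescale ζ)
    (PowerSeries.mk_add_choose_mul_one_sub_pow_eq_one (S := R) (d := i))
  rw [map_mul, map_pow, map_sub, map_one, PowerSeries.rescale_X, PowerSeries.rescale_mk] at h
  have hseries : expPolySeries ζ ((ascPochhammer R i).comp (X + 1)) =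
      PowerSeries.C (i ! : R) * PowerSeries.mk fun k => ζ ^ k * (i + k).choose i := by
    ext k
    rw [expPolySeries, PowerSeries.coeff_mk, PowerSeries.coeff_C_mul, PowerSeries.coeff_mk,
      eval_natCast_ascPochhammer_comp_X_add_one, add_comm k]
    push_cast
    ring
  rw [hseries]
  push_cast
  rw [mul_comm, mul_assoc, h, mul_one]

variable {K : Type*} [Field K]

theorem exists_one_sub_C_mul_X_pow_mul_expPolySeries_eq {ζ : K} (hζ : ζ ≠ 0) {d : ℕ}
    {P : K[X]} (hP : P.natDegree ≤ d) :
    ∃ N : K[X], (((1 - C ζ * X) ^ (d + 1) : K[X]) : K⟦X⟧) * expPolySeries ζ P = N ∧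
      N.eval ζ⁻¹ = d ! * P.coeff d := by
  induction d generalizing P with
  | zero =>
    obtain ⟨a, rfl⟩ : ∃ a, P = C a := ⟨_, eq_C_of_natDegree_le_zero hP⟩
    refine ⟨C a, ?_, by simp⟩
    have hB := one_sub_C_mul_X_pow_mul_expPolySeries_ascPochhammer ζ 0
    rw [ascPochhammer_zero, one_comp] at hB
    rw [← mul_one (C a), expPolySeries_C_mul, mul_left_comm, hB]
    simp
  | succ d ih =>
    set a := P.coeff (d + 1)
    set B := (ascPochhammer K (d + 1)).comp (X + 1)
    have hBmonic : B.Monic := (monic_ascPochhammer K (d + 1)).comp_X_add_C 1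
    have hBdeg : B.natDegree = d + 1 := by
      rw [natDegree_comp, ascPochhammer_natDegree, ← C_1, natDegree_X_add_C, mul_one]
    obtain ⟨N, hN, -⟩ := ih (hBmonic.natDegree_sub_C_coeff_mul_le hBdeg hP)
    have hsplit : expPolySeries ζ P =
        expPolySeries ζ (P - C a * B) + PowerSeries.C a * expPolySeries ζ B := by
      rw [← expPolySeries_C_mul, ← expPolySeries_add, sub_add_cancel]
    have hB := one_sub_C_mul_X_pow_mul_expPolySeries_ascPochhammer ζ (d + 1)
    refine ⟨(1 - C ζ * X) * N + C (a * (d + 1)!), ?_, ?_⟩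
    · push_cast at hN hB ⊢
      linear_combination (1 - PowerSeries.C ζ * PowerSeries.X) ^ (d + 1 + 1) * hsplit +
        (1 - PowerSeries.C ζ * PowerSeries.X) * hN + PowerSeries.C a * hB -
        map_mul PowerSeries.C a ((d + 1)! : K)
    · simp only [eval_add, eval_mul, eval_sub, eval_one, eval_C, eval_X, mul_inv_cancel₀ hζ,
        sub_self, zero_mul, zero_add, a]
      ring

/-- `F` is the expansion of a rational function `V / U` with `U ω ≠ 0`. -/
def HasNoPoleAt (ω : K) (F : K⟦X⟧) : Prop :=
  ∃ U V : K[X], U.eval ω ≠ 0 ∧ (U : K⟦X⟧) * F = V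

theorem HasNoPoleAt.add {ω : K} {F G : K⟦X⟧} (hF : HasNoPoleAt ω F) (hG : HasNoPoleAt ω G) :
    HasNoPoleAt ω (F + G) := by
  obtain ⟨U, V, hU, hUF⟩ := hF
  obtain ⟨U', V', hU', hUG⟩ := hG
  refine ⟨U * U', V * U' + U * V', by simp [hU, hU'], ?_⟩
  push_cast
  linear_combination (U' : K⟦X⟧) * hUF + (U : K⟦X⟧) * hUG

theorem hasNoPoleAt_zero (ω : K) : HasNoPoleAt ω 0 :=
  ⟨1, 0, by simp, by simp⟩

theorem le_rootMultiplicity_inv_of_mul_add_eq {ζ : K} (hζ : ζ ≠ 0) {den num N : K[X]}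
    {F G : K⟦X⟧} {m : ℕ} (hden : den ≠ 0) (h : (den : K⟦X⟧) * (F + G) = num)
    (hF : (((1 - C ζ * X) ^ m : K[X]) : K⟦X⟧) * F = N) (hN : N.eval ζ⁻¹ ≠ 0)
    (hG : HasNoPoleAt ζ⁻¹ G) :
    m ≤ den.rootMultiplicity ζ⁻¹ := by
  obtain ⟨U, V, hU, hUG⟩ := hG
  rcases m with _ | m
  · exact Nat.zero_le _
  set L : K[X] := 1 - C ζ * X
  have hL : L.eval ζ⁻¹ = 0 := by simp [L, mul_inv_cancel₀ hζ]
  set T := U * N + L ^ (m + 1) * V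
  have hT : ¬ T.IsRoot ζ⁻¹ := by simp [T, hL, hU, hN]
  have hdenT : den * T = L ^ (m + 1) * U * num := Polynomial.coe_injective K <| by
    push_cast [T] at hF ⊢
    linear_combination ((L : K⟦X⟧) ^ (m + 1) * U) * h - ((den : K⟦X⟧) * U) * hF -
      ((den : K⟦X⟧) * (L : K⟦X⟧) ^ (m + 1)) * hUG
  have hdvd : (X - C ζ⁻¹) ^ (m + 1) ∣ den * T :=
    hdenT ▸ dvd_mul_of_dvd_left
      (dvd_mul_of_dvd_left (pow_dvd_pow_of_dvd (dvd_iff_isRoot.mpr hL) _) _) _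
  have hdenT0 : den * T ≠ 0 := mul_ne_zero hden fun hT0 => hT (by simp [hT0])
  have := (le_rootMultiplicity_iff hdenT0).mpr hdvd
  rwa [rootMultiplicity_mul hdenT0, rootMultiplicity_eq_zero hT, add_zero] at this

theorem natDegree_lt_rootMultiplicity_inv_of_mul_sum_expPolySeries_eq [CharZero K]
    {S : Finset K} (hS : (0 : K) ∉ S) {P : K → K[X]} {den num : K[X]} (hden : den ≠ 0)
    (h : (den : K⟦X⟧) * ∑ ζ ∈ S, expPolySeries ζ (P ζ) = num) {ζ : K} (hζ : ζ ∈ S)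
    (hPζ : P ζ ≠ 0) :
    (P ζ).natDegree < den.rootMultiplicity ζ⁻¹ := by
  classical
  have hζ0 : ζ ≠ 0 := ne_of_mem_of_not_mem hζ hS
  obtain ⟨N, hN, hNeval⟩ := exists_one_sub_C_mul_X_pow_mul_expPolySeries_eq hζ0 le_rfl
  refine le_rootMultiplicity_inv_of_mul_add_eq hζ0 hden (num := num)
    (G := ∑ ζ' ∈ S.erase ζ, expPolySeries ζ' (P ζ')) ?_ hN ?_ ?_
  · rwa [Finset.add_sum_erase _ (fun ζ => expPolySeries ζ (P ζ)) hζ]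
  · rw [hNeval]
    exact mul_ne_zero (Nat.cast_ne_zero.mpr (Nat.factorial_ne_zero _))
      (leadingCoeff_ne_zero.mpr hPζ)
  · refine Finset.sum_induction _ (HasNoPoleAt ζ⁻¹) (fun _ _ => HasNoPoleAt.add)
      (hasNoPoleAt_zero _) fun ζ' hζ' => ?_
    obtain ⟨N', hN', -⟩ := exists_one_sub_C_mul_X_pow_mul_expPolySeries_eq
      (ne_of_mem_of_not_mem (Finset.mem_of_mem_erase hζ') hS) (le_refl (P ζ').natDegree)
    refine ⟨_, N', ?_, hN'⟩
    have hne : ζ' * ζ⁻¹ ≠ 1 := (mul_inv_eq_one₀ hζ0).not.mpr (Finset.ne_of_mem_erase hζ')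
    simpa [sub_eq_zero] using hne.symm

end ExpPolySeries

theorem poles_give_period_general (D j n : ℕ) (hj : j ≤ D)
    (c : ℕ → ℤ → ℂ)
    (hper : ∀ i, ∃ p : ℕ, 0 < p ∧ ∀ k : ℤ, c i (k + p) = c i k)
    (q : ℤ → ℂ)
    (hq : ∀ k : ℤ, q k = ∑ i ∈ Finset.range (D + 1), c i k * (k : ℂ) ^ i)
    (num den : Polynomial ℂ) (hden : den ≠ 0)
    (hr : (den : PowerSeries ℂ) * PowerSeries.mk (fun k : ℕ => q k) =
      (num : PowerSeries ℂ))
    (hpoles : ∀ ω : ℂ, den.IsRoot ω → j + 1 ≤ den.rootMultiplicity ω →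
      ω ^ n = 1) :
    ∀ k : ℤ, c j (k + n) = c j k := by
  obtain ⟨P, hP, hcP⟩ := exists_pos_common_period (Finset.range (D + 1)) fun i _ => hper i
  set S := nthRootsFinset P (1 : ℂ)
  have hS : (0 : ℂ) ∉ S := by simp [S, mem_nthRootsFinset hP, hP.ne']
  choose! β hβ using fun i (hi : i ∈ Finset.range (D + 1)) =>
    (hcP i hi).exists_eq_sum_nthRootsFinset_mul_zpow hP
  set Q : ℂ → ℂ[X] := fun ζ => ∑ i ∈ Finset.range (D + 1), C (β i ζ) * X ^ i
  have hgf : PowerSeries.mk (fun k : ℕ => q k) = ∑ ζ ∈ S, expPolySeries ζ (Q ζ) := by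
    simp only [hq]
    exact mk_eq_sum_expPolySeries fun i hi k => by simpa using hβ i hi k
  have hjD : j ∈ Finset.range (D + 1) := Finset.mem_range.mpr (Nat.lt_succ_of_le hj)
  have hroots : ∀ ζ ∈ S, β j ζ ≠ 0 → ζ ^ n = 1 := by
    intro ζ hζ hβζ
    have hcoeff : (Q ζ).coeff j = β j ζ := by simp [Q, hjD]
    have hlt := natDegree_lt_rootMultiplicity_inv_of_mul_sum_expPolySeries_eq hS hden
      (hgf ▸ hr) hζ fun h0 => hβζ (by rw [← hcoeff, h0, coeff_zero])
    have hj' : j + 1 ≤ den.rootMultiplicity ζ⁻¹ :=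
      (le_natDegree_of_ne_zero (hcoeff ▸ hβζ)).trans_lt hlt
    have hroot : den.IsRoot ζ⁻¹ := (rootMultiplicity_pos hden).mp (by omega)
    simpa using hpoles ζ⁻¹ hroot hj'
  intro k
  rw [hβ j hjD (k + n), hβ j hjD k]
  exact periodic_sum_mul_zpow hS hroots k

/-- Lemma `basiclemmarefined` (b): if every pole of order at
least `j+1` of the generating function `num/den` (in lowest terms) of a
quasi-polynomial `q` is an n-th root of unity, then `n` is a period of the
coefficient function `c_j`. -/
theorem poles_give_period (D j n : ℕ) (hn : 0 < n) (hj : j ≤ D)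
    (c : ℕ → ℤ → ℂ)
    (hper : ∀ i, ∃ p : ℕ, 0 < p ∧ ∀ k : ℤ, c i (k + p) = c i k)
    (q : ℤ → ℂ)
    (hq : ∀ k : ℤ, q k = ∑ i ∈ Finset.range (D + 1), c i k * (k : ℂ) ^ i)
    (num den : Polynomial ℂ) (hcop : IsCoprime num den) (hden : den ≠ 0)
    (hprop : num.degree < den.degree)
    (hr : (den : PowerSeries ℂ) * PowerSeries.mk (fun k : ℕ => q k) =
      (num : PowerSeries ℂ))
    (hpoles : ∀ ω : ℂ, den.IsRoot ω → j + 1 ≤ den.rootMultiplicity ω →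
      ω ^ n = 1) :
    ∀ k : ℤ, c j (k + n) = c j k :=
  poles_give_period_general D j n hj c hper q hq num den hden hr hpoles
end

section
/- Let d ≥ e and let α_d | α_{d−1} | ⋯ | α_e | β_e | α_{e−1} | β_{e−1} | ⋯ | α_0 | β_0 be a chain of divisibilities of positive integers. Fix j with j ≤ 2e and j+1 = 2m even. Define g_j = lcm{gcd(α_i, β_{j−i}) : 0 ≤ i ≤ d, 0 ≤ j−i ≤ e}. Then lcm{α_{j+1}, α_{j+2}, …, α_d, β_{j+1}, …, β_e, g_j} = β_m. -/
/-- Case 1 of the proof of Theorem `zaslavsharpthm`: given the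
divisibility chain `α_d | ⋯ | α_e | β_e | α_{e-1} | β_{e-1} | ⋯ | α_0 | β_0`
and `j ≤ 2e` with `j + 1 = 2m`, we have
`lcm{α_{j+1},…,α_d, β_{j+1},…,β_e, g_j} = β_m`, where
`g_j = lcm{gcd(α_i, β_{j-i}) : 0 ≤ i ≤ d, 0 ≤ j-i ≤ e}`. -/
theorem lcm_chain_odd_case (d e : ℕ) (hde : e ≤ d) (α β : ℕ → ℕ)
    (hα : ∀ i ≤ d, 0 < α i) (hβ : ∀ i ≤ e, 0 < β i)
    (h1 : ∀ i, e ≤ i → i < d → α (i + 1) ∣ α i)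
    (h2 : ∀ i ≤ e, α i ∣ β i)
    (h3 : ∀ i, i < e → β (i + 1) ∣ α i)
    (j m : ℕ) (hj : j ≤ 2 * e) (hm : j + 1 = 2 * m) :
    Nat.lcm
      (Nat.lcm ((Finset.Icc (j + 1) d).lcm α) ((Finset.Icc (j + 1) e).lcm β))
      (((Finset.range (d + 1)).filter (fun i => i ≤ j ∧ j - i ≤ e)).lcm
        (fun i => Nat.gcd (α i) (β (j - i)))) = β m := by
  have hm1 : 1 ≤ m := by omega
  have hme : m ≤ e := by omega
  have step : ∀ i, i < d → α (i + 1) ∣ α i := by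
    intro i hid
    rcases le_or_gt e i with h | h
    · exact h1 i h hid
    · exact (h2 (i + 1) h).trans (h3 i h)
  have adesc : ∀ k i, k ≤ i → i ≤ d → α i ∣ α k := by
    intro k i hk
    induction i, hk using Nat.le_induction with
    | base => intro _; exact dvd_rfl
    | succ n hn ih => intro hnd; exact (step n (by omega)).trans (ih (by omega))
  have bstep : ∀ i, i < e → β (i + 1) ∣ β i := fun i h =>
    (h3 i h).trans (h2 i h.le)
  have bdesc : ∀ k i, k ≤ i → i ≤ e → β i ∣ β k := by
    intro k i hk
    induction i, hk using Nat.le_induction with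
    | base => intro _; exact dvd_rfl
    | succ n hn ih => intro hne; exact (bstep n (by omega)).trans (ih (by omega))
  have hadvd : ∀ i, m ≤ i → i ≤ d → α i ∣ β m := fun i ha hb =>
    (adesc m i ha hb).trans (h2 m hme)
  apply Nat.dvd_antisymm
  · apply Nat.lcm_dvd
    · apply Nat.lcm_dvd
      · apply Finset.lcm_dvd
        intro i hi
        simp only [Finset.mem_Icc] at hi
        exact hadvd i (by omega) hi.2
      · apply Finset.lcm_dvd
        intro i hi
        simp only [Finset.mem_Icc] at hi
        exact bdesc m i (by omega) hi.2
    · apply Finset.lcm_dvd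
      intro i hi
      simp only [Finset.mem_filter, Finset.mem_range] at hi
      obtain ⟨hid, hij, hje⟩ := hi
      rcases le_or_gt m i with h | h
      · exact (Nat.gcd_dvd_left _ _).trans (hadvd i h (by omega))
      · exact (Nat.gcd_dvd_right _ _).trans (bdesc m (j - i) (by omega) hje)
  · have hmem : (m - 1) ∈ (Finset.range (d + 1)).filter (fun i => i ≤ j ∧ j - i ≤ e) := by
      simp only [Finset.mem_filter, Finset.mem_range]; omega
    have hdg : β m ∣ Nat.gcd (α (m - 1)) (β (j - (m - 1))) := by
      have hji : j - (m - 1) = m := by omega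
      rw [hji]
      refine Nat.dvd_gcd ?_ dvd_rfl
      have := h3 (m - 1) (by omega)
      rwa [Nat.sub_add_cancel hm1] at this
    exact hdg.trans ((Finset.dvd_lcm hmem).trans (Nat.dvd_lcm_right _ _))
end

section
/- Let d ≥ e and let α_d | α_{d−1} | ⋯ | α_e | β_e | α_{e−1} | β_{e−1} | ⋯ | α_0 | β_0 be a chain of divisibilities of positive integers. Fix j with j > 2e. Define g_j = lcm{gcd(α_i, β_{j−i}) : 0 ≤ i ≤ d, 0 ≤ j−i ≤ e}. Then lcm{α_{j+1}, …, α_d, g_j} = α_{j−e}. -/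
/-- Case 3 of the proof of Theorem `zaslavsharpthm`: given the
divisibility chain `α_d | ⋯ | α_e | β_e | α_{e-1} | β_{e-1} | ⋯ | α_0 | β_0`
and `j > 2e`, we have `lcm{α_{j+1},…,α_d, g_j} = α_{j-e}`, where
`g_j = lcm{gcd(α_i, β_{j-i}) : 0 ≤ i ≤ d, 0 ≤ j-i ≤ e}`. -/
theorem lcm_chain_large_case (d e : ℕ) (hde : e ≤ d) (α β : ℕ → ℕ)
    (hα : ∀ i ≤ d, 0 < α i) (hβ : ∀ i ≤ e, 0 < β i)
    (h1 : ∀ i, e ≤ i → i < d → α (i + 1) ∣ α i)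
    (h2 : ∀ i ≤ e, α i ∣ β i)
    (h3 : ∀ i, i < e → β (i + 1) ∣ α i)
    (j : ℕ) (hj : 2 * e < j) (hjd : j ≤ d + e) :
    Nat.lcm ((Finset.Icc (j + 1) d).lcm α)
      (((Finset.range (d + 1)).filter (fun i => i ≤ j ∧ j - i ≤ e)).lcm
        (fun i => Nat.gcd (α i) (β (j - i)))) = α (j - e) := by
  -- chain for α above e
  have chainA' : ∀ n a, e ≤ a → a + n ≤ d → α (a + n) ∣ α a := by
    intro n
    induction n with
    | zero => intro a _ _; simp
    | succ n ih =>
      intro a ha h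
      have hstep := h1 (a + n) (by omega) (by omega)
      exact dvd_trans hstep (ih a ha (by omega))
  have chainA : ∀ a b, e ≤ a → a ≤ b → b ≤ d → α b ∣ α a := by
    intro a b ha hab hbd
    have : b = a + (b - a) := by omega
    rw [this]
    exact chainA' (b - a) a ha (by omega)
  -- β e divides β k for k ≤ e
  have chainB' : ∀ m, m ≤ e → β e ∣ β (e - m) := by
    intro m
    induction m with
    | zero => simp
    | succ m ih =>
      intro hm
      have h' := ih (by omega)
      have heq : e - m = (e - (m + 1)) + 1 := by omega
      rw [heq] at h'
      exact h'.trans ((h3 (e - (m + 1)) (by omega)).trans (h2 (e - (m + 1)) (by omega)))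
  have chainB : ∀ k ≤ e, β e ∣ β k := by
    intro k hk
    have := chainB' (e - k) (by omega)
    rwa [Nat.sub_sub_self hk] at this
  -- α i ∣ β (j - i) for relevant i
  have key : ∀ i, j - e ≤ i → i ≤ d → i ≤ j → α i ∣ β (j - i) := by
    intro i hi hid hij
    have h1' : α i ∣ α e := chainA e i (le_refl e) (by omega) hid
    exact h1'.trans ((h2 e le_rfl).trans (chainB (j - i) (by omega)))
  have hje : e ≤ j - e := by omega
  have hjed : j - e ≤ d := by omega
  apply Nat.dvd_antisymm
  · apply Nat.lcm_dvd
    · apply Finset.lcm_dvd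
      intro i hi
      rw [Finset.mem_Icc] at hi
      exact chainA (j - e) i hje (by omega) hi.2
    · apply Finset.lcm_dvd
      intro i hi
      simp only [Finset.mem_filter, Finset.mem_range] at hi
      exact (Nat.gcd_dvd_left _ _).trans (chainA (j - e) i hje (by omega) (by omega))
  · have hmem : (j - e) ∈ (Finset.range (d + 1)).filter (fun i => i ≤ j ∧ j - i ≤ e) := by
      simp only [Finset.mem_filter, Finset.mem_range]
      omega
    have hgcd : Nat.gcd (α (j - e)) (β (j - (j - e))) = α (j - e) :=
      Nat.gcd_eq_left (key (j - e) le_rfl hjed (by omega))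
    calc α (j - e) = Nat.gcd (α (j - e)) (β (j - (j - e))) := hgcd.symm
      _ ∣ _ := (Finset.dvd_lcm hmem).trans (Nat.dvd_lcm_right _ _)
end
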